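/- arXiv:cond-mat/0505665 — 2 statements merged into one kernel-verified Lean document; each statement's English description precedes it below -/
import Mathlib

section
/- For the stationary probability p_i(t) = N_i(t)/Z_u(t) with N_i(t) = (1 + ((u-1)/t) f_i^{m-1})^{1/(1-u)} and Z_u(t) = Σ_j N_j(t), the derivative satisfies ∂p_i/∂t = (p_i/t²)(f̂_i^{m-1} - Σ_j p_j f̂_j^{m-1}), where f̂_i^{m-1} = f_i^{m-1}/(1 + ((u-1)/t) f_i^{m-1}). -/
/-! Each weight `N_j` has logarithmic derivative `f̂_j^{m-1} / t²`: the chain rule produces the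
factor `(u - 1) · 1/(1 - u) = -1`. For weights with logarithmic derivatives `e_j`, the quotient
rule gives `(N_i / Σ N)' = p_i (e_i - Σ_j p_j e_j)`. -/

open Finset

theorem hasDerivAt_div_sum {ι : Type*} [Fintype ι] {N : ι → ℝ → ℝ} {e : ι → ℝ} {t : ℝ}
    (hN : ∀ j, HasDerivAt (N j) (N j t * e j) t) (hZ : ∑ j, N j t ≠ 0) (i : ι) :
    HasDerivAt (fun s => N i s / ∑ j, N j s)
      (N i t / (∑ j, N j t) * (e i - ∑ j, N j t / (∑ k, N k t) * e j)) t := by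
  have hsum : HasDerivAt (fun s => ∑ j, N j s) (∑ j, N j t * e j) t :=
    HasDerivAt.fun_sum fun j _ => hN j
  refine ((hN i).div hsum hZ).congr_deriv ?_
  simp only [div_mul_eq_mul_div, ← sum_div]
  field_simp

theorem hasDerivAt_one_add_div_mul_rpow {u t a : ℝ} (hu : u ≠ 1) (ht : t ≠ 0)
    (hb : 0 < 1 + (u - 1) / t * a) :
    HasDerivAt (fun s => (1 + (u - 1) / s * a) ^ (1 / (1 - u)))
      ((1 + (u - 1) / t * a) ^ (1 / (1 - u)) * (a / (1 + (u - 1) / t * a) / t ^ 2)) t := by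
  have hbase : HasDerivAt (fun s => 1 + (u - 1) / s * a) ((u - 1) * -(t ^ 2)⁻¹ * a) t := by
    simpa only [div_eq_mul_inv] using
      (((hasDerivAt_inv ht).const_mul (u - 1)).mul_const a).const_add 1
  refine (hbase.rpow_const (Or.inl hb.ne')).congr_deriv ?_
  have hu' : 1 - u ≠ 0 := sub_ne_zero.mpr (Ne.symm hu)
  rw [Real.rpow_sub_one hb.ne']
  field_simp
  ring

theorem deriv_stationary_prob_general {W : ℕ} (u t m : ℝ) (hu : u ≠ 1) (ht : 0 < t)
    (f : Fin W → ℝ)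
    (hpos : ∀ j, 0 < 1 + ((u - 1) / t) * f j ^ (m - 1)) (i : Fin W) :
    let N : Fin W → ℝ → ℝ :=
      fun j s => (1 + ((u - 1) / s) * f j ^ (m - 1)) ^ (1 / (1 - u))
    let Z : ℝ → ℝ := fun s => ∑ j, N j s
    let p : Fin W → ℝ := fun j => N j t / Z t
    let fhat : Fin W → ℝ := fun j => f j ^ (m - 1) / (1 + ((u - 1) / t) * f j ^ (m - 1))
    HasDerivAt (fun s : ℝ => N i s / Z s)
      (p i / t ^ 2 * (fhat i - ∑ j, p j * fhat j)) t := by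
  intro N Z p fhat
  have hN : ∀ j, HasDerivAt (N j) (N j t * (fhat j / t ^ 2)) t := fun j =>
    hasDerivAt_one_add_div_mul_rpow hu ht.ne' (hpos j)
  have hZ : 0 < Z t :=
    sum_pos (fun j _ => Real.rpow_pos_of_pos (hpos j) _) ⟨i, mem_univ i⟩
  refine (hasDerivAt_div_sum hN hZ.ne' i).congr_deriv ?_
  simp only [p, Z, mul_div_assoc', ← sum_div]
  ring

/-- For the stationary probability `p_i(t) = N_i(t)/Z_u(t)`, the
derivative satisfies `∂p_i/∂t = (p_i/t²)(f̂_i^{m-1} - Σ_j p_j f̂_j^{m-1})`. -/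
theorem deriv_stationary_prob {W : ℕ} (u t m : ℝ) (hu : u ≠ 1) (ht : 0 < t)
    (hm : 1 < m) (f : Fin W → ℝ) (hf : ∀ j, 0 ≤ f j)
    (hpos : ∀ j, 0 < 1 + ((u - 1) / t) * f j ^ (m - 1)) (i : Fin W) :
    let N : Fin W → ℝ → ℝ :=
      fun j s => (1 + ((u - 1) / s) * f j ^ (m - 1)) ^ (1 / (1 - u))
    let Z : ℝ → ℝ := fun s => ∑ j, N j s
    let p : Fin W → ℝ := fun j => N j t / Z t
    let fhat : Fin W → ℝ := fun j => f j ^ (m - 1) / (1 + ((u - 1) / t) * f j ^ (m - 1))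
    HasDerivAt (fun s : ℝ => N i s / Z s)
      (p i / t ^ 2 * (fhat i - ∑ j, p j * fhat j)) t :=
  deriv_stationary_prob_general u t m hu ht f hpos i
end

section
/- For any subset A of energy indices, with p_A = Σ_{i∈A} p_i and f̂_A^{m-1} = (Σ_{i∈A} p_i f̂_i^{m-1})/p_A, the derivative of the aggregated probability satisfies ∂p_A/∂t = (p_A/t²)(f̂_A^{m-1} - ⟨f̂^{m-1}⟩), where ⟨f̂^{m-1}⟩ = Σ_{j=1}^W p_j f̂_j^{m-1}. That is, aggregated states satisfy the same scale-invariant differential equation as individual states. -/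
/-!
Each weight `N_j(s) = (1 + ((u-1)/s) c_j)^{1/(1-u)}`, `c_j = f_j^{m-1}`, has logarithmic
derivative `f̂_j^{m-1}/s²`.
For any weights with nonzero total and logarithmic derivatives `a_j`, the normalized weights
obey the replicator equation `p_i' = p_i (a_i - ⟨a⟩)`; summing it over `A` and factoring out `p_A`
gives the aggregated equation.
-/

theorem hasDerivAt_one_add_div_rpow {u c t : ℝ} (hu : u ≠ 1) (ht : t ≠ 0)
    (hg : 1 + ((u - 1) / t) * c ≠ 0) :
    HasDerivAt (fun s => (1 + ((u - 1) / s) * c) ^ (1 / (1 - u)))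
      ((1 + ((u - 1) / t) * c) ^ (1 / (1 - u)) * (c / (1 + ((u - 1) / t) * c)) / t ^ 2) t := by
  have hbase : HasDerivAt (fun s => 1 + ((u - 1) / s) * c) ((u - 1) * c * -(t ^ 2)⁻¹) t := by
    have hfun : (fun s : ℝ => 1 + ((u - 1) / s) * c) = fun s => 1 + (u - 1) * c * s⁻¹ := by
      funext s; ring
    rw [hfun]
    exact ((hasDerivAt_inv ht).const_mul _).const_add 1
  refine (hbase.rpow_const (p := 1 / (1 - u)) (Or.inl hg)).congr_deriv ?_
  have h1u : 1 - u ≠ 0 := sub_ne_zero.mpr hu.symm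
  rw [Real.rpow_sub_one hg]
  field_simp
  ring

theorem hasDerivAt_div_sum_of_logDeriv {ι : Type*} [Fintype ι] {N : ι → ℝ → ℝ} {a : ι → ℝ}
    {t : ℝ} (hN : ∀ j, HasDerivAt (N j) (N j t * a j) t) (hZ : ∑ j, N j t ≠ 0) (i : ι) :
    HasDerivAt (fun s => N i s / ∑ j, N j s)
      ((N i t / ∑ j, N j t) * (a i - ∑ j, (N j t / ∑ k, N k t) * a j)) t := by
  have hsum : HasDerivAt (fun s => ∑ j, N j s) (∑ j, N j t * a j) t :=
    HasDerivAt.fun_sum fun j _ => hN j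
  refine ((hN i).fun_div hsum hZ).congr_deriv ?_
  simp only [div_mul_eq_mul_div _ _ (a _), ← Finset.sum_div]
  field_simp

theorem deriv_aggregated_prob_general {W : ℕ} (u t m : ℝ) (hu : u ≠ 1) (ht : 0 < t)
    (f : Fin W → ℝ)
    (hpos : ∀ j, 0 < 1 + ((u - 1) / t) * f j ^ (m - 1))
    (A : Finset (Fin W)) :
    let N : Fin W → ℝ → ℝ :=
      fun j s => (1 + ((u - 1) / s) * f j ^ (m - 1)) ^ (1 / (1 - u))
    let Z : ℝ → ℝ := fun s => ∑ j, N j s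
    let p : Fin W → ℝ := fun j => N j t / Z t
    let fhat : Fin W → ℝ := fun j => f j ^ (m - 1) / (1 + ((u - 1) / t) * f j ^ (m - 1))
    let pA : ℝ := ∑ i ∈ A, p i
    let fhatA : ℝ := (∑ i ∈ A, p i * fhat i) / pA
    0 < pA →
    HasDerivAt (fun s : ℝ => ∑ i ∈ A, N i s / Z s)
      (pA / t ^ 2 * (fhatA - ∑ j, p j * fhat j)) t := by
  intro N Z p fhat pA fhatA hpA
  have hN : ∀ j, HasDerivAt (N j) (N j t * (fhat j / t ^ 2)) t := fun j => by
    simpa only [mul_div_assoc] using hasDerivAt_one_add_div_rpow hu ht.ne' (hpos j).ne'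
  have hZ : Z t ≠ 0 := fun h => hpA.ne' (by simp [pA, p, h])
  refine (HasDerivAt.fun_sum fun i _ => hasDerivAt_div_sum_of_logDeriv hN hZ i).congr_deriv ?_
  have hfhatA : pA * fhatA = ∑ i ∈ A, p i * fhat i := mul_div_cancel₀ _ hpA.ne'
  show ∑ i ∈ A, p i * (fhat i / t ^ 2 - ∑ j, p j * (fhat j / t ^ 2)) = _
  simp only [mul_sub, Finset.sum_sub_distrib, ← Finset.sum_mul, mul_div_assoc', ← Finset.sum_div]
  rw [← hfhatA]
  ring

/-- For any subset `A` of energy indices, with `p_A = Σ_{i∈A} p_i`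
and `f̂_A^{m-1}` the conditional mean of the transformed energy over `A`, the
aggregated probability satisfies the same scale-invariant differential equation
as individual states: `∂p_A/∂t = (p_A/t²)(f̂_A^{m-1} - ⟨f̂^{m-1}⟩)`. -/
theorem deriv_aggregated_prob {W : ℕ} (u t m : ℝ) (hu : u ≠ 1) (ht : 0 < t)
    (hm : 1 < m) (f : Fin W → ℝ) (hf : ∀ j, 0 ≤ f j)
    (hpos : ∀ j, 0 < 1 + ((u - 1) / t) * f j ^ (m - 1))
    (A : Finset (Fin W)) (hA : A.Nonempty) :
    let N : Fin W → ℝ → ℝ :=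
      fun j s => (1 + ((u - 1) / s) * f j ^ (m - 1)) ^ (1 / (1 - u))
    let Z : ℝ → ℝ := fun s => ∑ j, N j s
    let p : Fin W → ℝ := fun j => N j t / Z t
    let fhat : Fin W → ℝ := fun j => f j ^ (m - 1) / (1 + ((u - 1) / t) * f j ^ (m - 1))
    let pA : ℝ := ∑ i ∈ A, p i
    let fhatA : ℝ := (∑ i ∈ A, p i * fhat i) / pA
    0 < pA →
    HasDerivAt (fun s : ℝ => ∑ i ∈ A, N i s / Z s)
      (pA / t ^ 2 * (fhatA - ∑ j, p j * fhat j)) t :=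
  deriv_aggregated_prob_general u t m hu ht f hpos A
end
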